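/- Let μ be a measure on ℝ^d with density f(‖y‖₂) where f : (0,∞) → [0,∞) is nonincreasing, and let H > 0, R > 0. Then μ(B(Re_1, H) ∩ {x : x_1 ≥ R}) ≤ μ(B(Re_1, H) ∩ {x : x_1 ≤ R}), and consequently μ(B(Re_1,H)) ≤ 2 μ(B(Re_1,H) ∩ {x : x_1 ≤ R}). -/

import Mathlib

/-!
The affine reflection `T` across the hyperplane `{x₁ = R}` preserves Lebesgue measure and the ball
`B(Re₁, H)`, and swaps its two halves. For `x₁ ≥ R` and `R ≥ 0` one has
`‖T x‖² = ‖x‖² - 4R(x₁ - R) ≤ ‖x‖²`, so the density `f(‖·‖)` can only grow when the far half is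
carried onto the near one. The second inequality follows by covering the ball with the two halves.
-/

open MeasureTheory Metric
open scoped ENNReal RealInnerProductSpace

theorem withDensity_apply_le_of_measurePreserving {α : Type*} [MeasurableSpace α] {ν : Measure α}
    {g : α → ℝ≥0∞} {T : α → α} (hT : MeasurePreserving T ν ν) (hTe : MeasurableEmbedding T)
    {s t : Set α} (hs : MeasurableSet s) (ht : MeasurableSet t) (hst : T ⁻¹' t = s)
    (hg : ∀ᵐ x ∂ν, x ∈ s → g x ≤ g (T x)) :
    ν.withDensity g s ≤ ν.withDensity g t := by
  rw [withDensity_apply _ hs, withDensity_apply _ ht,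
    ← hT.setLIntegral_comp_preimage_emb hTe _ t, hst]
  exact setLIntegral_mono_ae' hs hg

section
variable {E : Type*} [NormedAddCommGroup E] [InnerProductSpace ℝ E]

/-- The reflection across the affine hyperplane `{x | ⟪x, u⟫ = R}`, provided `‖u‖ = 1`. -/
noncomputable def hyperplaneReflection (u : E) (R : ℝ) (x : E) : E :=
  (2 * R) • u + (ℝ ∙ u)ᗮ.reflection x

variable {u : E} {R : ℝ}

theorem inner_reflection_orthogonalComplement_singleton (u x : E) :
    ⟪(ℝ ∙ u)ᗮ.reflection x, u⟫ = -⟪x, u⟫ := by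
  have h := (ℝ ∙ u)ᗮ.reflection.inner_map_map x u
  rw [Submodule.reflection_orthogonalComplement_singleton_eq_neg, inner_neg_right] at h
  linarith

theorem inner_hyperplaneReflection (hu : ‖u‖ = 1) (x : E) :
    ⟪hyperplaneReflection u R x, u⟫ = 2 * R - ⟪x, u⟫ := by
  rw [hyperplaneReflection, inner_add_left, inner_reflection_orthogonalComplement_singleton,
    real_inner_smul_left, real_inner_self_eq_norm_sq, hu]
  ring

theorem norm_sq_hyperplaneReflection (hu : ‖u‖ = 1) (x : E) :
    ‖hyperplaneReflection u R x‖ ^ 2 = ‖x‖ ^ 2 - 4 * R * (⟪x, u⟫ - R) := by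
  rw [hyperplaneReflection, norm_add_sq_real, norm_smul, LinearIsometryEquiv.norm_map,
    real_inner_smul_left, real_inner_comm, inner_reflection_orthogonalComplement_singleton, hu,
    mul_one, Real.norm_eq_abs, sq_abs]
  ring

theorem norm_hyperplaneReflection_le (hu : ‖u‖ = 1) (hR : 0 ≤ R) {x : E} (hx : R ≤ ⟪x, u⟫) :
    ‖hyperplaneReflection u R x‖ ≤ ‖x‖ := by
  have h := norm_sq_hyperplaneReflection (R := R) hu x
  have : 0 ≤ 4 * R * (⟪x, u⟫ - R) := by have := sub_nonneg.2 hx; positivity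
  exact pow_le_pow_iff_left₀ (norm_nonneg _) (norm_nonneg _) two_ne_zero |>.1 (by linarith)

theorem hyperplaneReflection_smul_self :
    hyperplaneReflection u R (R • u) = R • u := by
  rw [hyperplaneReflection, map_smul, Submodule.reflection_orthogonalComplement_singleton_eq_neg]
  module

theorem dist_hyperplaneReflection (x y : E) :
    dist (hyperplaneReflection u R x) (hyperplaneReflection u R y) = dist x y := by
  rw [hyperplaneReflection, hyperplaneReflection, dist_add_left, LinearIsometryEquiv.dist_map]

theorem preimage_hyperplaneReflection_closedBall (r : ℝ) :
    hyperplaneReflection u R ⁻¹' closedBall (R • u) r = closedBall (R • u) r := by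
  ext x
  rw [Set.mem_preimage, mem_closedBall, mem_closedBall, ← hyperplaneReflection_smul_self,
    dist_hyperplaneReflection, hyperplaneReflection_smul_self]

variable [MeasurableSpace E] [BorelSpace E]

theorem measurableEmbedding_hyperplaneReflection (u : E) (R : ℝ) :
    MeasurableEmbedding (hyperplaneReflection u R) :=
  ((Homeomorph.addLeft ((2 * R) • u)).measurableEmbedding).comp
    ((ℝ ∙ u)ᗮ.reflection).toHomeomorph.measurableEmbedding

variable [FiniteDimensional ℝ E]

theorem measurePreserving_hyperplaneReflection (u : E) (R : ℝ) :
    MeasurePreserving (hyperplaneReflection u R) :=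
  (measurePreserving_add_left volume _).comp ((ℝ ∙ u)ᗮ.reflection).measurePreserving

theorem withDensity_radial_closedBall_inter_le {f : ℝ → ℝ} (hf : AntitoneOn f (Set.Ioi 0))
    {u : E} (hu : ‖u‖ = 1) {R : ℝ} (hR : 0 ≤ R) (r : ℝ) :
    volume.withDensity (fun y => ENNReal.ofReal (f ‖y‖))
        (closedBall (R • u) r ∩ {x | R ≤ ⟪x, u⟫}) ≤
      volume.withDensity (fun y => ENNReal.ofReal (f ‖y‖))
        (closedBall (R • u) r ∩ {x | ⟪x, u⟫ ≤ R}) := by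
  have : Nontrivial E := ⟨u, 0, ne_zero_of_norm_ne_zero (by simp [hu])⟩
  set T := hyperplaneReflection u R
  have hT := measurePreserving_hyperplaneReflection u R
  have hmeas_inner : Measurable fun x : E => ⟪x, u⟫ :=
    (continuous_id.inner continuous_const).measurable
  refine withDensity_apply_le_of_measurePreserving hT (measurableEmbedding_hyperplaneReflection u R)
    (measurableSet_closedBall.inter (measurableSet_le measurable_const hmeas_inner))
    (measurableSet_closedBall.inter (measurableSet_le hmeas_inner measurable_const)) ?_ ?_
  · rw [Set.preimage_inter, preimage_hyperplaneReflection_closedBall]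
    congr 1
    ext x
    simp only [Set.mem_preimage, Set.mem_ofPred_eq, inner_hyperplaneReflection hu]
    constructor <;> intro h <;> linarith
  · -- `f` is only antitone on `(0, ∞)`, so the point `T x = 0` has to be discarded
    have hnull : volume (T ⁻¹' {0}) = 0 := by
      rw [hT.measure_preimage (measurableSet_singleton 0).nullMeasurableSet, measure_singleton]
    filter_upwards [measure_eq_zero_iff_ae_notMem.1 hnull] with x hx0 hx
    have hTx : 0 < ‖T x‖ := norm_pos_iff.2 hx0
    have hle := norm_hyperplaneReflection_le hu hR hx.2
    exact ENNReal.ofReal_le_ofReal (hf hTx (hTx.trans_le hle) hle)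

end

/-- For a radial measure with nonincreasing density, the half of the ball
`B(Re₁, H)` beyond the hyperplane `{x₁ = R}` has no more mass than the half before it. -/
theorem radial_ball_reflection (d : ℕ) (hd : 1 ≤ d) (f : ℝ → ℝ)
    (hf_mono : ∀ x y, 0 < x → x ≤ y → f y ≤ f x)
    (μ : Measure (EuclideanSpace ℝ (Fin d)))
    (hμ : μ = volume.withDensity (fun y => ENNReal.ofReal (f ‖y‖)))
    (R H : ℝ) (hR : 0 < R) :
    let e₁ : EuclideanSpace ℝ (Fin d) := EuclideanSpace.single (⟨0, by omega⟩ : Fin d) (1 : ℝ)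
    μ (closedBall (R • e₁) H ∩ {x | R ≤ x ⟨0, by omega⟩}) ≤
        μ (closedBall (R • e₁) H ∩ {x | x ⟨0, by omega⟩ ≤ R}) ∧
      μ (closedBall (R • e₁) H) ≤
        2 * μ (closedBall (R • e₁) H ∩ {x | x ⟨0, by omega⟩ ≤ R}) := by
  intro e₁
  set i : Fin d := ⟨0, by omega⟩
  set B := closedBall (R • e₁) H
  have hcoord : ∀ x : EuclideanSpace ℝ (Fin d), ⟪x, e₁⟫ = x i := by
    simp [e₁, i, EuclideanSpace.inner_single_right]
  have key := withDensity_radial_closedBall_inter_le (fun x hx y _ hxy => hf_mono x y hx hxy)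
    (u := e₁) (by simp [e₁]) hR.le H
  simp only [hcoord, ← hμ] at key
  refine ⟨key, ?_⟩
  calc μ B ≤ μ (B ∩ {x | R ≤ x i}) + μ (B \ {x | R ≤ x i}) := measure_le_inter_add_sdiff _ _ _
    _ ≤ μ (B ∩ {x | x i ≤ R}) + μ (B ∩ {x | x i ≤ R}) :=
      add_le_add key (measure_mono fun x hx => ⟨hx.1, show x i ≤ R from le_of_not_ge hx.2⟩)
    _ = 2 * μ (B ∩ {x | x i ≤ R}) := (two_mul _).symm
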